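/- For all positive integers n ≥ k ≥ 1, the polynomial (−1)^{n−k}·js_n^k(z) is a polynomial in z of degree exactly n−k, and every coefficient of this polynomial is a positive integer. -/
import Mathlib

open Polynomial

noncomputable def js : ℕ → ℕ → Polynomial ℤ
  | 0, 0 => 1
  | 0, _ + 1 => 0
  | _ + 1, 0 => 0
  | n + 1, k + 1 => js n k - C (n : ℤ) * (C (n : ℤ) + X) * js n (k + 1)

lemma js_eq_zero : ∀ n k, n < k → js n k = 0 := by
  intro n
  induction n with
  | zero => intro k hk; match k, hk with | k+1, _ => rfl
  | succ n ih =>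
    intro k hk
    match k, hk with
    | k+1, hk =>
      have h1 : js n k = 0 := ih k (by omega)
      have h2 : js n (k+1) = 0 := ih (k+1) (by omega)
      simp [js, h1, h2]

lemma js_diag : ∀ n, js n n = 1 := by
  intro n
  induction n with
  | zero => rfl
  | succ n ih => simp [js, ih, js_eq_zero n (n+1) (by omega)]

lemma step_lemma (n : ℕ) (hn : 1 ≤ n) (q : Polynomial ℤ) (d : ℕ)
    (h0 : ∀ i, d < i → q.coeff i = 0) (h1 : ∀ i ≤ d, 0 < q.coeff i) :
    (∀ i, d + 1 < i → (C (n:ℤ) * (C (n:ℤ) + X) * q).coeff i = 0) ∧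
    (∀ i ≤ d + 1, 0 < (C (n:ℤ) * (C (n:ℤ) + X) * q).coeff i) := by
  have key : ∀ i, (C (n:ℤ) * (C (n:ℤ) + X) * q).coeff i
      = (n:ℤ)^2 * q.coeff i + (n:ℤ) * (X * q).coeff i := by
    intro i
    have h : C (n:ℤ) * (C (n:ℤ) + X) * q = C ((n:ℤ)^2) * q + C (n:ℤ) * (X * q) := by
      rw [C_pow]; ring
    rw [h, coeff_add, coeff_C_mul, coeff_C_mul]
  have hn' : (0:ℤ) < (n:ℤ) := by exact_mod_cast hn
  constructor
  · intro i hi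
    match i, hi with
    | i+1, hi =>
      rw [key, coeff_X_mul, h0 (i+1) (by omega), h0 i (by omega)]
      ring
  · intro i hi
    rw [key]
    match i with
    | 0 =>
      rw [mul_coeff_zero, coeff_X_zero, zero_mul, mul_zero, add_zero]
      have := h1 0 (Nat.zero_le d)
      nlinarith
    | j+1 =>
      rw [coeff_X_mul]
      have hj : 0 < q.coeff j := h1 j (by omega)
      have hq : 0 ≤ q.coeff (j+1) := by
        rcases le_or_gt (j+1) d with h | h
        · exact (h1 (j+1) h).le
        · rw [h0 (j+1) h]
      nlinarith

lemma main_aux : ∀ n k, 1 ≤ k → k ≤ n →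
    (∀ i, n - k < i → ((-1 : Polynomial ℤ) ^ (n - k) * js n k).coeff i = 0) ∧
    (∀ i ≤ n - k, 0 < ((-1 : Polynomial ℤ) ^ (n - k) * js n k).coeff i) := by
  intro n
  induction n with
  | zero => intro k hk hkn; omega
  | succ n ih =>
    intro k hk hkn
    match k, hk with
    | k+1, _ =>
      rcases eq_or_lt_of_le hkn with heq | hlt
      · -- k+1 = n+1
        have : k = n := by omega
        subst this
        rw [js_diag]
        simp only [Nat.sub_self, pow_zero, one_mul]
        constructor
        · intro i hi
          rw [coeff_one, if_neg (by omega)]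
        · intro i hi
          have : i = 0 := by omega
          subst this; simp
      · -- k+1 ≤ n
        have hkn' : k + 1 ≤ n := by omega
        have hd : n + 1 - (k+1) = (n - (k+1)) + 1 := by omega
        have hrec : js (n+1) (k+1) = js n k - C (n:ℤ) * (C (n:ℤ) + X) * js n (k+1) := rfl
        set d := n - (k+1) with hddef
        have ih2 := ih (k+1) (by omega) hkn'
        -- second term: (-1)^(d+1) * (- C n (C n + X) js n (k+1)) = C n (C n+X) * ((-1)^d * js n (k+1))
        have hstep := step_lemma n (by omega) ((-1 : Polynomial ℤ) ^ d * js n (k+1)) d ih2.1 ih2.2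
        rcases Nat.eq_zero_or_pos k with hk0 | hk1
        · -- k = 0 : js n 0 = 0
          subst hk0
          have hjs0 : js n 0 = 0 := by
            match n, hkn' with | m+1, _ => rfl
          have heq2 : (-1 : Polynomial ℤ) ^ (d + 1) * js (n+1) (0+1)
              = C (n:ℤ) * (C (n:ℤ) + X) * ((-1 : Polynomial ℤ) ^ d * js n (0+1)) := by
            rw [hrec, hjs0, pow_succ]
            ring
          rw [hd, heq2]
          exact hstep
        · -- k ≥ 1
          have ih1 := ih k hk1 (by omega)
          have hd1 : n - k = d + 1 := by omega
          have heq2 : (-1 : Polynomial ℤ) ^ (d + 1) * js (n+1) (k+1)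
              = (-1 : Polynomial ℤ) ^ (d + 1) * js n k
                + C (n:ℤ) * (C (n:ℤ) + X) * ((-1 : Polynomial ℤ) ^ d * js n (k+1)) := by
            rw [hrec, pow_succ]
            ring
          rw [hd1] at ih1
          rw [hd, heq2]
          constructor
          · intro i hi
            rw [coeff_add, ih1.1 i hi, hstep.1 i hi]; ring
          · intro i hi
            rw [coeff_add]
            exact add_pos (ih1.2 i hi) (hstep.2 i hi)

/-- For `n ≥ k ≥ 1`, `(-1)^(n-k) * js n k` has degree exactly `n - k` in `z` and all its
coefficients (up to degree `n - k`) are positive integers. -/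
theorem stmt1 (n k : ℕ) (hk : 1 ≤ k) (hkn : k ≤ n) :
    ((-1 : Polynomial ℤ) ^ (n - k) * js n k).degree = (n - k : ℕ) ∧
    ∀ i ≤ n - k, 0 < ((-1 : Polynomial ℤ) ^ (n - k) * js n k).coeff i := by
  obtain ⟨h0, h1⟩ := main_aux n k hk hkn
  refine ⟨?_, h1⟩
  have hle : ((-1 : Polynomial ℤ) ^ (n - k) * js n k).degree ≤ (n - k : ℕ) := by
    rw [degree_le_iff_coeff_zero]
    intro m hm
    have : (n - k : ℕ) < m := by exact_mod_cast hm
    exact h0 m this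
  exact degree_eq_of_le_of_coeff_ne_zero hle (h1 (n-k) le_rfl).ne'
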